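/- The function u(t, x, y) = 1 / (1 + exp(Re·(x + y − t)/2)) satisfies the 2D Burgers equation u_t + u·u_x + u·u_y = ν·(u_xx + u_yy) with ν = 1/Re, for all (x, y) ∈ ℝ² and t ∈ ℝ, for any Re > 0. -/

import Mathlib

lemma burgers_hne (s : ℝ) : (1 + Real.exp s) ≠ 0 := by positivity

noncomputable def burgersG' (s : ℝ) : ℝ := -(Real.exp s) / (1 + Real.exp s) ^ 2

lemma burgers_hg (s : ℝ) :
    HasDerivAt (fun s => 1 / (1 + Real.exp s)) (burgersG' s) s := by
  have := ((Real.hasDerivAt_exp s).const_add 1).inv (burgers_hne s)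
  simp only [burgersG', one_div]
  exact this

lemma burgers_hg2 (s : ℝ) :
    HasDerivAt burgersG' (Real.exp s * (Real.exp s - 1) / (1 + Real.exp s) ^ 3) s := by
  have hnum : HasDerivAt (fun s => -(Real.exp s)) (-(Real.exp s)) s := (Real.hasDerivAt_exp s).neg
  have hden : HasDerivAt (fun s => (1 + Real.exp s) ^ 2)
      ((2 : ℕ) * (1 + Real.exp s) ^ 1 * Real.exp s) s :=
    ((Real.hasDerivAt_exp s).const_add 1).pow 2
  have h := hnum.div hden (pow_ne_zero 2 (burgers_hne s))
  have hfun : burgersG' = fun s => -(Real.exp s) / (1 + Real.exp s) ^ 2 := rfl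
  rw [hfun]
  refine HasDerivAt.congr_deriv h ?_
  have h1 : (1 + Real.exp s) ≠ 0 := burgers_hne s
  field_simp
  ring

/-- `u(t,x,y) = 1/(1 + exp(Re(x+y−t)/2))` satisfies the 2D Burgers
equation `u_t + u u_x + u u_y = ν (u_xx + u_yy)` with `ν = 1/Re`, for all
`(t,x,y)` and any `Re > 0`. -/
theorem exact_solution_2d_burgers (Re : ℝ) (hRe : 0 < Re) :
    let u : ℝ → ℝ → ℝ → ℝ := fun t x y => 1 / (1 + Real.exp (Re * (x + y - t) / 2))
    let ν : ℝ := 1 / Re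
    ∀ t x y : ℝ,
      deriv (fun t' => u t' x y) t
        + u t x y * deriv (fun x' => u t x' y) x
        + u t x y * deriv (fun y' => u t x y') y
      = ν * (deriv (deriv (fun x' => u t x' y)) x
            + deriv (deriv (fun y' => u t x y')) y) := by
  intro u ν t x y
  set s : ℝ := Re * (x + y - t) / 2 with hs
  set e : ℝ := Real.exp s with he
  -- inner affine maps
  have hit : HasDerivAt (fun t' => Re * (x + y - t') / 2) (Re * (-1) / 2) t := by
    have h1 : HasDerivAt (fun t' : ℝ => x + y - t') (-1) t := by
      simpa using (hasDerivAt_id t).const_sub (x + y)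
    exact (h1.const_mul Re).div_const 2
  have hix : ∀ x' : ℝ, HasDerivAt (fun x' => Re * (x' + y - t) / 2) (Re * 1 / 2) x' := by
    intro x'
    have h1 : HasDerivAt (fun x' : ℝ => x' + y - t) 1 x' := by
      simpa using ((hasDerivAt_id x').add_const y).sub_const t
    exact (h1.const_mul Re).div_const 2
  have hiy : ∀ y' : ℝ, HasDerivAt (fun y' => Re * (x + y' - t) / 2) (Re * 1 / 2) y' := by
    intro y'
    have h1 : HasDerivAt (fun y' : ℝ => x + y' - t) 1 y' := by
      simpa using ((hasDerivAt_id y').const_add x).sub_const t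
    exact (h1.const_mul Re).div_const 2
  -- first derivatives
  have ht : HasDerivAt (fun t' => u t' x y) (burgersG' s * (Re * (-1) / 2)) t :=
    (burgers_hg _).comp t hit
  have hx : ∀ x', HasDerivAt (fun x'' => u t x'' y) (burgersG' (Re * (x' + y - t) / 2) * (Re * 1 / 2)) x' :=
    fun x' => (burgers_hg _).comp x' (hix x')
  have hy : ∀ y', HasDerivAt (fun y'' => u t x y'') (burgersG' (Re * (x + y' - t) / 2) * (Re * 1 / 2)) y' :=
    fun y' => (burgers_hg _).comp y' (hiy y')
  -- deriv of first derivatives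
  have hdx : deriv (fun x'' => u t x'' y) = fun x' => burgersG' (Re * (x' + y - t) / 2) * (Re * 1 / 2) :=
    funext fun x' => (hx x').deriv
  have hdy : deriv (fun y'' => u t x y'') = fun y' => burgersG' (Re * (x + y' - t) / 2) * (Re * 1 / 2) :=
    funext fun y' => (hy y').deriv
  -- second derivatives
  have hxx : HasDerivAt (fun x' => burgersG' (Re * (x' + y - t) / 2) * (Re * 1 / 2))
      (Real.exp s * (Real.exp s - 1) / (1 + Real.exp s) ^ 3 * (Re * 1 / 2) * (Re * 1 / 2)) x := by
    have := ((burgers_hg2 (Re * (x + y - t) / 2)).comp x (hix x)).mul_const (Re * 1 / 2)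
    simpa [← hs] using this
  have hyy : HasDerivAt (fun y' => burgersG' (Re * (x + y' - t) / 2) * (Re * 1 / 2))
      (Real.exp s * (Real.exp s - 1) / (1 + Real.exp s) ^ 3 * (Re * 1 / 2) * (Re * 1 / 2)) y := by
    have := ((burgers_hg2 (Re * (x + y - t) / 2)).comp y (hiy y)).mul_const (Re * 1 / 2)
    simpa [← hs] using this
  have hsx : Re * (x + y - t) / 2 = s := rfl
  rw [ht.deriv, hdx, hdy, hxx.deriv, hyy.deriv]
  show burgersG' s * (Re * (-1) / 2)
      + 1 / (1 + Real.exp s) * (burgersG' (Re * (x + y - t) / 2) * (Re * 1 / 2))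
      + 1 / (1 + Real.exp s) * (burgersG' (Re * (x + y - t) / 2) * (Re * 1 / 2))
      = ν * (Real.exp s * (Real.exp s - 1) / (1 + Real.exp s) ^ 3 * (Re * 1 / 2) * (Re * 1 / 2)
           + Real.exp s * (Real.exp s - 1) / (1 + Real.exp s) ^ 3 * (Re * 1 / 2) * (Re * 1 / 2))
  rw [hsx]
  simp only [burgersG', ν]
  have h1 : (1 + Real.exp s) ≠ 0 := burgers_hne s
  have h2 : Re ≠ 0 := hRe.ne'
  field_simp
  ring
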